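/- The fully degenerate Bell polynomials Bel_{n,λ}(x) := Σ_{k=0}^n {n brace k}_λ (1)_{k,λ} x^k have exponential generating function e_λ(x(e_λ(t) − 1)) = Σ_{n=0}^∞ Bel_{n,λ}(x) t^n/n!, as formal power series in t, where e_λ(u) denotes the formal series Σ_{m≥0} (1)_{m,λ} u^m/m!. -/

import Mathlib

/-!
Since `e_λ^{a+b}(t) = e_λ^a(t) e_λ^b(t)` (a Vandermonde identity for `(x)_{n,λ}`), for every
natural `N` we have `e_λ^N(t) = (1 + (e_λ(t) - 1))^N = Σ_m (N choose m) (e_λ(t) - 1)^m`.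
Comparing `t^n`-coefficients and writing `(N choose m) = (N)_m / m!` expands `(N)_{n,λ}` in the
falling factorials `(N)_m`. Since `(N)_m = 0` for `N < m` and `(m)_m = m! ≠ 0`, such an
expansion is unique, which identifies
`{n brace m}_λ = (n!/m!) [t^n] (e_λ(t) - 1)^m`, and the generating function follows by summing
over `m`.
-/

open PowerSeries

/-- The degenerate falling factorial `(x)_{n,λ}`. -/
def degFall (lam x : ℝ) (n : ℕ) : ℝ := ∏ i ∈ Finset.range n, (x - i * lam)

/-- The ordinary falling factorial `(x)_k`. -/
def fallF (x : ℝ) (k : ℕ) : ℝ := ∏ i ∈ Finset.range k, (x - i)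

/-- The degenerate exponential `e_λ^y(t) = Σ_{m≥0} (y)_{m,λ} t^m/m!`. -/
noncomputable def degExpP (lam y : ℝ) : PowerSeries ℝ :=
  PowerSeries.mk fun m => degFall lam y m / (Nat.factorial m)

/-- Composition `Σ_{m≥0} (c m / m!) g^m` of an exponential-type series with a
power series `g` with zero constant term: since `g^m` contributes nothing to the
`n`-th coefficient for `m > n`, the `n`-th coefficient is that of the truncated
finite sum. -/
noncomputable def expComp (c : ℕ → ℝ) (g : PowerSeries ℝ) : PowerSeries ℝ :=
  PowerSeries.mk fun n => PowerSeries.coeff (R := ℝ) n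
    (∑ m ∈ Finset.range (n + 1), PowerSeries.C (R := ℝ) (c m / (Nat.factorial m)) * g ^ m)

open Finset
open scoped Nat

lemma fallF_natCast (N k : ℕ) : fallF N k = N.descFactorial k := by
  rw [fallF, ← descPochhammer_eval_eq_prod_range, descPochhammer_eval_eq_descFactorial]

lemma degFall_succ (lam y : ℝ) (n : ℕ) :
    degFall lam y (n + 1) = degFall lam y n * (y - n * lam) :=
  prod_range_succ _ _

theorem degFall_add (lam a b : ℝ) (n : ℕ) :
    degFall lam (a + b) n =
      ∑ ij ∈ antidiagonal n, (n.choose ij.1 : ℝ) * (degFall lam a ij.1 * degFall lam b ij.2) := by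
  induction n with
  | zero => simp [degFall]
  | succ n ih =>
    rw [sum_antidiagonal_choose_succ_mul (fun i j => degFall lam a i * degFall lam b j),
      degFall_succ, ih, sum_mul, ← sum_add_distrib]
    refine sum_congr rfl fun ij hij => ?_
    rw [HasAntidiagonal.mem_antidiagonal] at hij
    rw [degFall_succ, degFall_succ, ← Nat.choose_symm_of_eq_add hij.symm, ← hij]
    push_cast
    ring

theorem degExpP_add (lam a b : ℝ) : degExpP lam (a + b) = degExpP lam a * degExpP lam b := by
  ext n
  simp only [degExpP, coeff_mul, coeff_mk, degFall_add, sum_div]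
  refine sum_congr rfl fun ij hij => ?_
  obtain rfl := HasAntidiagonal.mem_antidiagonal.mp hij
  rw [Nat.cast_add_choose]
  field_simp

lemma degExpP_zero (lam : ℝ) : degExpP lam 0 = 1 := by
  ext (_ | n)
  · simp [degExpP, degFall]
  · simp [degExpP, degFall, prod_range_succ', coeff_one]

lemma degExpP_natCast (lam : ℝ) (N : ℕ) : degExpP lam N = degExpP lam 1 ^ N := by
  induction N with
  | zero => simpa using degExpP_zero lam
  | succ N ih => rw [Nat.cast_succ, degExpP_add, ih, pow_succ]

lemma constantCoeff_degExpP_one_sub_one (lam : ℝ) :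
    constantCoeff (degExpP lam 1 - 1) = 0 := by
  simp [degExpP, degFall, ← coeff_zero_eq_constantCoeff]

lemma PowerSeries.coeff_pow_eq_zero_of_lt {R : Type*} [CommSemiring R] {g : R⟦X⟧}
    (hg : constantCoeff g = 0) {n m : ℕ} (h : n < m) : coeff n (g ^ m) = 0 :=
  X_pow_dvd_iff.mp (pow_dvd_pow_of_dvd (X_dvd_iff.mpr hg) m) n h

lemma coeff_degExpP_natCast (lam : ℝ) (N n : ℕ) :
    coeff n (degExpP lam N) =
      ∑ m ∈ range (n + 1), (N.choose m : ℝ) * coeff n ((degExpP lam 1 - 1) ^ m) := by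
  set g := degExpP lam 1 - 1 with hg
  have hvanish : ∀ m, N < m ∨ n < m → (N.choose m : ℝ) * coeff n (g ^ m) = 0 := by
    rintro m (h | h)
    · simp [Nat.choose_eq_zero_of_lt h]
    · rw [coeff_pow_eq_zero_of_lt (constantCoeff_degExpP_one_sub_one lam) h, mul_zero]
  have hbinom : degExpP lam N = ∑ m ∈ range (N + 1), C (N.choose m : ℝ) * g ^ m := by
    rw [degExpP_natCast, ← sub_add_cancel (degExpP lam 1) 1, ← hg, add_pow]
    simp [mul_comm]
  calc coeff n (degExpP lam N)
      = ∑ m ∈ range (N + n + 1), (N.choose m : ℝ) * coeff n (g ^ m) := by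
        rw [hbinom, map_sum]
        simp_rw [coeff_C_mul]
        exact sum_subset (range_subset_range.mpr (by omega))
          fun m _ hm => hvanish m (.inl (by simp at hm; omega))
    _ = _ := (sum_subset (range_subset_range.mpr (by omega))
          fun m _ hm => hvanish m (.inr (by simp at hm; omega))).symm

lemma degFall_natCast_eq_sum (lam : ℝ) (N n : ℕ) :
    degFall lam N n =
      ∑ m ∈ range (n + 1), n ! / m ! * coeff n ((degExpP lam 1 - 1) ^ m) * fallF N m := by
  have h := coeff_degExpP_natCast lam N n
  rw [degExpP, coeff_mk, div_eq_iff (by positivity), sum_mul] at h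
  rw [h]
  refine sum_congr rfl fun m _ => ?_
  rw [fallF_natCast, Nat.descFactorial_eq_factorial_mul_choose]
  push_cast
  field_simp

lemma eq_zero_of_sum_mul_fallF_natCast_eq_zero {n : ℕ} {f : ℕ → ℝ}
    (h : ∀ N ≤ n, ∑ m ∈ range (n + 1), f m * fallF N m = 0) : ∀ m ≤ n, f m = 0 := by
  intro m
  induction m using Nat.strong_induction_on with
  | _ m ih =>
    intro hm
    have hsum := h m hm
    rw [sum_eq_single_of_mem m (mem_range.mpr (by omega))] at hsum
    · simpa [fallF_natCast, Nat.descFactorial_self, Nat.factorial_ne_zero] using hsum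
    · intro k _ hkm
      rcases hkm.lt_or_gt with hlt | hgt
      · rw [ih k hlt (by omega), zero_mul]
      · rw [fallF_natCast, Nat.descFactorial_eq_zero_iff_lt.mpr hgt, Nat.cast_zero, mul_zero]

lemma degStirling_eq_coeff {lam : ℝ} {S : ℕ → ℕ → ℝ}
    (hS : ∀ (n : ℕ) (z : ℝ), degFall lam z n = ∑ k ∈ range (n + 1), S n k * fallF z k)
    {n m : ℕ} (hm : m ≤ n) :
    S n m = n ! / m ! * coeff n ((degExpP lam 1 - 1) ^ m) := by
  refine sub_eq_zero.mp (eq_zero_of_sum_mul_fallF_natCast_eq_zero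
    (f := fun m => S n m - n ! / m ! * coeff n ((degExpP lam 1 - 1) ^ m)) (fun N _ => ?_) m hm)
  simp_rw [sub_mul, sum_sub_distrib, ← hS, ← degFall_natCast_eq_sum, sub_self]

lemma coeff_expComp_C_mul (c : ℕ → ℝ) (x : ℝ) (g : ℝ⟦X⟧) (n : ℕ) :
    coeff n (expComp c (C x * g)) =
      ∑ m ∈ range (n + 1), c m / m ! * x ^ m * coeff n (g ^ m) := by
  simp only [expComp, coeff_mk, map_sum, mul_pow, ← map_pow, ← mul_assoc, ← map_mul, coeff_C_mul]

/-- The fully degenerate Bell polynomials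
`Bel_{n,λ}(x) = Σ_{k=0}^n {n brace k}_λ (1)_{k,λ} x^k` have exponential
generating function `e_λ(x(e_λ(t) − 1)) = Σ_n Bel_{n,λ}(x) t^n/n!`, where
`{n brace k}_λ = S n k` is defined by `(x)_{n,λ} = Σ_k S n k (x)_k`. -/
theorem stmt3 (lam x : ℝ) (S : ℕ → ℕ → ℝ)
    (hS : ∀ (n : ℕ) (z : ℝ),
      degFall lam z n = ∑ k ∈ Finset.range (n + 1), S n k * fallF z k) :
    expComp (fun m => degFall lam 1 m) (PowerSeries.C (R := ℝ) x * (degExpP lam 1 - 1)) =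
      PowerSeries.mk fun n =>
        (∑ k ∈ Finset.range (n + 1), S n k * degFall lam 1 k * x ^ k) /
          (Nat.factorial n) := by
  ext n
  rw [coeff_expComp_C_mul, coeff_mk, sum_div]
  refine sum_congr rfl fun m hm => ?_
  rw [degStirling_eq_coeff hS (Nat.lt_succ_iff.mp (mem_range.mp hm))]
  field_simp
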